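/- arXiv:1705.04011 — 5 statements merged into one kernel-verified Lean document; each statement's English description precedes it below -/
import Mathlib

section
/- Let d be a positive integer with 1 ≤ d ≤ 48, and define f(x) = (1/6)(x - 1/2)^3 + ((48 - d)/(24d))(x - 1/2). Then for all x ∈ [0,1), one has √(3/(2d)) · f'(x) + f(x) ≥ 0, where f' denotes the derivative of f. -/
/-! Put `t = x - 1/2`, `c = (48 - d)/(24d)` and `s = √(3/(2d))`, so `f = t³/6 + c t`,
`f' = t²/2 + c`, and the claim follows from `|t| (t²/6 + c) ≤ s (t²/2 + c)` for `|t| ≤ 1/2`.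
Since `c ≥ 0` and `s² = (24c + 1)/32`, squaring removes the root and leaves a polynomial
inequality in `c ≥ 0` and `v = t² ∈ [0, 1/4]`; it is tight at `(c, v) = (1/24, 1/4)`,
i.e. `d = 24`, `x = 0`. -/

theorem mul_sq_add_le_of_le_quarter {c v : ℝ} (hc : 0 ≤ c) (hv₀ : 0 ≤ v) (hv : v ≤ 1 / 4) :
    32 * v * (v / 6 + c) ^ 2 ≤ (24 * c + 1) * (v / 2 + c) ^ 2 := by
  nlinarith [mul_nonneg hc (sq_nonneg (c - 1 / 24)),
    mul_nonneg (sub_nonneg.2 hv) (sq_nonneg (c - 1 / 24)),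
    mul_nonneg hv₀ (sq_nonneg (c - v / 6)), mul_nonneg (mul_nonneg hv₀ hv₀) (sub_nonneg.2 hv)]

theorem cubic_add_mul_deriv_nonneg {s c t : ℝ} (hc : 0 ≤ c) (hs : 0 ≤ s)
    (hs2 : s ^ 2 = (24 * c + 1) / 32) (ht : t ^ 2 ≤ 1 / 4) :
    0 ≤ s * (1 / 2 * t ^ 2 + c) + (1 / 6 * t ^ 3 + c * t) := by
  have hsq : (t * (t ^ 2 / 6 + c)) ^ 2 ≤ (s * (t ^ 2 / 2 + c)) ^ 2 := by
    rw [mul_pow, mul_pow, hs2]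
    nlinarith [mul_sq_add_le_of_le_quarter hc (sq_nonneg t) ht]
  have hbound := (abs_le_of_sq_le_sq' hsq (by positivity)).1
  linarith

theorem hasDerivAt_cubic (a c x : ℝ) :
    HasDerivAt (fun x => 1 / 6 * (x - a) ^ 3 + c * (x - a)) (1 / 2 * (x - a) ^ 2 + c) x := by
  have hlin : HasDerivAt (fun x => x - a) 1 x := (hasDerivAt_id x).sub_const a
  exact (((hlin.fun_pow 3).const_mul (1 / 6)).add (hlin.const_mul c)).congr_deriv
    (by norm_num; ring)

/-- Proposition A.1(i): for `1 ≤ d ≤ 48` and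
`f x = (1/6)(x - 1/2)^3 + ((48 - d)/(24d))(x - 1/2)`, one has
`√(3/(2d)) · f'(x) + f(x) ≥ 0` for all `x ∈ [0,1)`. -/
theorem stmt_0 (d : ℕ) (hd1 : 1 ≤ d) (hd2 : d ≤ 48)
    (f : ℝ → ℝ)
    (hf : ∀ x : ℝ, f x = (1/6) * (x - 1/2)^3 + ((48 - (d:ℝ)) / (24 * d)) * (x - 1/2)) :
    ∀ x ∈ Set.Ico (0:ℝ) 1,
      Real.sqrt (3 / (2 * d)) * deriv f x + f x ≥ 0 := by
  intro x ⟨hx₀, hx₁⟩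
  have hd₀ : (0 : ℝ) < d := by exact_mod_cast hd1
  have hd48 : (d : ℝ) ≤ 48 := by exact_mod_cast hd2
  set c := (48 - (d : ℝ)) / (24 * d)
  have hc : 0 ≤ c := div_nonneg (by linarith) (by positivity)
  have hs2 : Real.sqrt (3 / (2 * d)) ^ 2 = (24 * c + 1) / 32 := by
    rw [Real.sq_sqrt (by positivity)]
    simp only [c]
    field_simp
    ring
  have hderiv : deriv f x = 1 / 2 * (x - 1 / 2) ^ 2 + c := by
    rw [funext hf]
    exact (hasDerivAt_cubic _ _ _).deriv
  rw [hderiv, hf x]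
  exact cubic_add_mul_deriv_nonneg hc (Real.sqrt_nonneg _) hs2 (by nlinarith)
end

section
/- Define p(x) = (1/6)(1+x)^2 + (1/2)x^2 − 1/42 and q(x) = x·((1/2)(1+x)^2 + (1/6)x^2 − 1/42). Then for all x ∈ [−1/2, 0], p(x)·√((1+x)^2 + 2/49) + q(x) > 0. -/
/-- Proposition A.2(ii): with `p x = (1/6)(1+x)^2 + (1/2)x^2 − 1/42` and
`q x = x·((1/2)(1+x)^2 + (1/6)x^2 − 1/42)`, one has
`p x · √((1+x)^2 + 2/49) + q x > 0` on `[-1/2, 0]`. -/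
theorem stmt_3 (p q : ℝ → ℝ)
    (hp : ∀ x : ℝ, p x = (1/6) * (1 + x)^2 + (1/2) * x^2 - 1/42)
    (hq : ∀ x : ℝ, q x = x * ((1/2) * (1 + x)^2 + (1/6) * x^2 - 1/42)) :
    ∀ x ∈ Set.Icc (-(1:ℝ)/2) 0,
      p x * Real.sqrt ((1 + x)^2 + 2/49) + q x > 0 := by
  intro x hx
  obtain ⟨h1, h2⟩ := hx
  rw [hp, hq]
  have hs : (0:ℝ) ≤ (1+x)^2 + 2/49 := by positivity
  have h3 : Real.sqrt ((1+x)^2 + 2/49) ^ 2 = (1+x)^2 + 2/49 := Real.sq_sqrt hs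
  have h4 : (0:ℝ) ≤ Real.sqrt ((1+x)^2 + 2/49) := Real.sqrt_nonneg _
  set t := Real.sqrt ((1+x)^2 + 2/49) with ht
  have hpp : (0:ℝ) < (1/6) * (1 + x)^2 + (1/2) * x^2 - 1/42 := by
    nlinarith [sq_nonneg (x+1/2), sq_nonneg x]
  have hqn : x * ((1/2) * (1 + x)^2 + (1/6) * x^2 - 1/42) ≤ 0 := by
    apply mul_nonpos_of_nonpos_of_nonneg h2
    nlinarith [sq_nonneg (x+1/2), sq_nonneg x]
  have hF : ((1+x)^2 + 2/49) * ((1/6) * (1 + x)^2 + (1/2) * x^2 - 1/42)^2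
      > (x * ((1/2) * (1 + x)^2 + (1/6) * x^2 - 1/42))^2 := by
    nlinarith [mul_nonneg (neg_nonneg.mpr h2) (by linarith : (0:ℝ) ≤ x + 1/2),
      sq_nonneg (x + 38/100), sq_nonneg (x*(x+1/2)), sq_nonneg (x^2 + 88/100*x + 14/100),
      mul_nonneg (mul_nonneg (neg_nonneg.mpr h2) (by linarith : (0:ℝ) ≤ x + 1/2)) (sq_nonneg (x + 38/100)),
      sq_nonneg x, sq_nonneg (x+1/2)]
  rw [← h3] at hF
  have hpt : 0 ≤ ((1/6) * (1 + x)^2 + (1/2) * x^2 - 1/42) * t := mul_nonneg hpp.le h4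
  nlinarith [hF, hpt, hqn]
end

section
/- With the intersection data of the blow-up of P³ at a point (L³ = E³ = 1, mixed products zero, H = 2L − E, d = H³ = 7), the minimum positive value of (H²D)² − H³(HD²) over integral divisor classes D = aL + bE equals 2, hence e₁(X) = 2 and κ(X) = min{2/49, 2/49, 3/(2·2·7)} = 2/49. -/
/-- The triple intersection product on `NS(X) ≅ ℤ⟨L, E⟩` of the blow-up of `P³`
at a point: `L³ = E³ = 1` and all mixed products vanish. -/
def blowupTriple (D₁ D₂ D₃ : ℤ × ℤ) : ℤ :=
  D₁.1 * D₂.1 * D₃.1 + D₁.2 * D₂.2 * D₃.2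

/-- For the blow-up of `P³` at a point (`H = 2L − E`, `d = H³ = 7`), the minimum
positive value of `(H²D)² − H³(HD²)` over integral classes `D` is `2`, hence
`e₁(X) = 2`, and `κ(X) = min{2/49, 2/49, 3/(2·2·7)} = 2/49`. -/
theorem stmt_11 :
    IsLeast {v : ℤ | 0 < v ∧ ∃ a b : ℤ,
      v = (blowupTriple (2, -1) (2, -1) (a, b))^2
        - blowupTriple (2, -1) (2, -1) (2, -1) * blowupTriple (2, -1) (a, b) (a, b)} 2 ∧
    min (min ((2:ℝ)/49) ((2:ℝ)/49)) (3/(2*2*7)) = 2/49 := by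
  constructor
  · constructor
    · exact ⟨by norm_num, 1, 0, by simp [blowupTriple]⟩
    · rintro v ⟨hv, a, b, rfl⟩
      have key : (blowupTriple (2, -1) (2, -1) (a, b))^2
          - blowupTriple (2, -1) (2, -1) (2, -1) * blowupTriple (2, -1) (a, b) (a, b)
          = 2 * (a + 2 * b)^2 := by simp [blowupTriple]; ring
      rw [key] at hv ⊢
      have hpos : 0 < (a + 2 * b)^2 := by nlinarith
      nlinarith
  · norm_num [min_def]
end

section
/- For X = P² × P¹ with H = 3L₁ + 2L₂ and d = H³ = 54, the minimal positive value of 9(2a − 3b)² over integers a, b is 9; hence e₁(X) = 9, and κ(X) = min{9/54², 22/54², 1/36} = 1/324. -/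
/-- For `X = P² × P¹` with `d = H³ = 54`: the minimal positive value of
`9(2a − 3b)²` over integers `a, b` is `9`, hence `e₁(X) = 9`, and
`κ(X) = min{9/54², 22/54², 1/36} = 1/324`. -/
theorem stmt_13 :
    IsLeast {v : ℤ | 0 < v ∧ ∃ a b : ℤ, v = 9 * (2 * a - 3 * b)^2} 9 ∧
    min (min ((9:ℝ)/54^2) ((22:ℝ)/54^2)) (3/(2*1*54)) = 1/324 := by
  constructor
  · constructor
    · exact ⟨by norm_num, 2, 1, by ring⟩
    · rintro v ⟨hv, a, b, rfl⟩
      have h : 2 * a - 3 * b ≠ 0 := by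
        intro h; rw [h] at hv; norm_num at hv
      have : 1 ≤ (2 * a - 3 * b)^2 := by
        have := Int.one_le_abs h
        nlinarith [sq_abs (2 * a - 3 * b)]
      nlinarith
  · norm_num
end

section
/- Fix α > 0 and a differentiable function ν(α) with dν/dα = −α/μ for a constant μ > 0. If μ > Ψ⁺_λ(α) := ν(α) + √(ν(α)² + α² + λ) for some λ ≥ 0, then d/dα [Ψ⁺_λ(α)] = (α/(μ·√(ν² + α² + λ)))·(μ − Ψ⁺_λ(α)) > 0; if instead μ < Ψ⁺_λ(α), then d/dα [Ψ⁺_λ(α)] < 0. -/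
/-- Monotonicity part of Proposition 3.7: if `ν` has derivative `−a/μ` (for a
constant `μ > 0`) and `Ψ⁺_λ(a) = ν a + √(ν a² + a² + λ)`, then at a fixed
`α > 0`: if `μ > Ψ⁺_λ(α)` the derivative of `Ψ⁺_λ` at `α` equals
`(α/(μ·√(ν α² + α² + λ)))·(μ − Ψ⁺_λ(α))` and is positive; if `μ < Ψ⁺_λ(α)`
then that derivative is negative. -/
theorem stmt_17 (μ lam : ℝ) (hμ : 0 < μ) (hlam : 0 ≤ lam) (α : ℝ) (hα : 0 < α)
    (ν Ψ : ℝ → ℝ)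
    (hν : ∀ a : ℝ, HasDerivAt ν (-a / μ) a)
    (hΨ : ∀ a : ℝ, Ψ a = ν a + Real.sqrt ((ν a)^2 + a^2 + lam)) :
    (μ > Ψ α →
      HasDerivAt Ψ
        ((α / (μ * Real.sqrt ((ν α)^2 + α^2 + lam))) * (μ - Ψ α)) α ∧
      0 < (α / (μ * Real.sqrt ((ν α)^2 + α^2 + lam))) * (μ - Ψ α)) ∧
    (μ < Ψ α →
      HasDerivAt Ψ
        ((α / (μ * Real.sqrt ((ν α)^2 + α^2 + lam))) * (μ - Ψ α)) α ∧
      (α / (μ * Real.sqrt ((ν α)^2 + α^2 + lam))) * (μ - Ψ α) < 0) := by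
  have hs : 0 < (ν α)^2 + α^2 + lam := by positivity
  set r := Real.sqrt ((ν α)^2 + α^2 + lam) with hr
  have hrpos : 0 < r := Real.sqrt_pos.mpr hs
  have hr2 : r ^ 2 = (ν α)^2 + α^2 + lam := Real.sq_sqrt hs.le
  have hΨeq : Ψ = fun a => ν a + Real.sqrt ((ν a)^2 + a^2 + lam) := funext hΨ
  have hinner : HasDerivAt (fun a => (ν a)^2 + a^2 + lam)
      ((2:ℕ) * (ν α)^(2-1) * (-α/μ) + 2 * α) α := by
    have h1 : HasDerivAt (fun a => (ν a)^2) ((2:ℕ) * (ν α)^(2-1) * (-α/μ)) α :=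
      (hν α).pow 2
    have h2 : HasDerivAt (fun a : ℝ => a^2) (2 * α) α := by
      simpa using hasDerivAt_pow 2 α
    simpa using (h1.add h2).add_const lam
  have hsq : HasDerivAt (fun a => Real.sqrt ((ν a)^2 + a^2 + lam))
      (((2:ℕ) * (ν α)^(2-1) * (-α/μ) + 2 * α) / (2 * r)) α :=
    hinner.sqrt hs.ne'
  have hD : HasDerivAt Ψ
      (-α/μ + ((2:ℕ) * (ν α)^(2-1) * (-α/μ) + 2 * α) / (2 * r)) α := by
    rw [hΨeq]
    exact (hν α).add hsq
  have hderiv : HasDerivAt Ψ ((α / (μ * r)) * (μ - Ψ α)) α := by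
    convert hD using 1
    rw [hΨ α]
    field_simp
    ring
  constructor
  · intro hlt
    refine ⟨hderiv, ?_⟩
    have : 0 < μ - Ψ α := by linarith
    positivity
  · intro hlt
    refine ⟨hderiv, ?_⟩
    have h1 : 0 < α / (μ * r) := by positivity
    have h2 : μ - Ψ α < 0 := by linarith
    exact mul_neg_of_pos_of_neg h1 h2
end
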